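/- arXiv:1111.2931 — 2 statements merged into one kernel-verified Lean document; each statement's English description precedes it below -/
import Mathlib

section
/- In a disk realization of a triangle-free graph with minimum degree ≥ 2: if uv and st are edges with u, v, s, t distinct vertices and the segments [p(u),p(v)] and [p(s),p(t)] intersect, then ‖p(u)−p(s)‖ + ‖p(v)−p(t)‖ ≤ ‖p(u)−p(v)‖ + ‖p(s)−p(t)‖ < r(u)+r(v)+r(s)+r(t), and consequently (us ∈ E or vt ∈ E) and (ut ∈ E or vs ∈ E), which forces a triangle — a contradiction; hence the two segments are disjoint. -/
/-- In a disk realization of a triangle-free graph of minimum degree at least 2,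
for edges `uv` and `st` with all four endpoints distinct: any common point of the
segments `[p(u),p(v)]` and `[p(s),p(t)]` would give
`‖p(u)−p(s)‖+‖p(v)−p(t)‖ ≤ ‖p(u)−p(v)‖+‖p(s)−p(t)‖ < r(u)+r(v)+r(s)+r(t)`,
forcing a triangle; hence the two segments are disjoint. -/
theorem stmt18 {V : Type*} [Fintype V] (G : SimpleGraph V) [DecidableRel G.Adj]
    (htf : G.CliqueFree 3) (hdeg : ∀ v, 2 ≤ G.degree v)
    (p : V → EuclideanSpace ℝ (Fin 2)) (r : V → ℝ) (hr : ∀ v, 0 < r v)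
    (hreal : ∀ u v, u ≠ v → (G.Adj u v ↔ dist (p u) (p v) < r u + r v))
    (u v s t : V) (huv : G.Adj u v) (hst : G.Adj s t)
    (hus : u ≠ s) (hut : u ≠ t) (hvs : v ≠ s) (hvt : v ≠ t) :
    (∀ q, q ∈ segment ℝ (p u) (p v) → q ∈ segment ℝ (p s) (p t) →
      dist (p u) (p s) + dist (p v) (p t) ≤ dist (p u) (p v) + dist (p s) (p t) ∧
      dist (p u) (p v) + dist (p s) (p t) < r u + r v + r s + r t) ∧
    segment ℝ (p u) (p v) ∩ segment ℝ (p s) (p t) = ∅ := by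
  have hduv : dist (p u) (p v) < r u + r v := (hreal u v huv.ne).mp huv
  have hdst : dist (p s) (p t) < r s + r t := (hreal s t hst.ne).mp hst
  have key : ∀ q, q ∈ segment ℝ (p u) (p v) → q ∈ segment ℝ (p s) (p t) →
      dist (p u) (p s) + dist (p v) (p t) ≤ dist (p u) (p v) + dist (p s) (p t) ∧
      dist (p u) (p v) + dist (p s) (p t) < r u + r v + r s + r t := by
    intro q h1 h2
    have e1 : dist (p u) q + dist q (p v) = dist (p u) (p v) :=
      dist_add_dist_of_mem_segment h1
    have e2 : dist (p s) q + dist q (p t) = dist (p s) (p t) :=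
      dist_add_dist_of_mem_segment h2
    constructor
    · calc dist (p u) (p s) + dist (p v) (p t)
          ≤ (dist (p u) q + dist q (p s)) + (dist (p v) q + dist q (p t)) := by
            gcongr <;> exact dist_triangle _ _ _
        _ = (dist (p u) q + dist q (p v)) + (dist (p s) q + dist q (p t)) := by
            rw [dist_comm q (p s), dist_comm (p v) q]; ring
        _ = dist (p u) (p v) + dist (p s) (p t) := by rw [e1, e2]
    · linarith
  refine ⟨key, ?_⟩
  rw [Set.eq_empty_iff_forall_notMem]
  rintro q ⟨h1, h2⟩
  -- from the ordering u,s / v,t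
  have H1 := key q h1 h2
  have hA : G.Adj u s ∨ G.Adj v t := by
    by_contra h
    push_neg at h
    have h1' : ¬ dist (p u) (p s) < r u + r s := fun hd => h.1 ((hreal u s hus).mpr hd)
    have h2' : ¬ dist (p v) (p t) < r v + r t := fun hd => h.2 ((hreal v t hvt).mpr hd)
    push_neg at h1' h2'
    linarith [H1.1, H1.2]
  -- from the ordering u,t / v,s : use segment symmetry
  have h2' : q ∈ segment ℝ (p t) (p s) := by rwa [segment_symm]
  have e1 : dist (p u) q + dist q (p v) = dist (p u) (p v) :=
    dist_add_dist_of_mem_segment h1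
  have e2 : dist (p t) q + dist q (p s) = dist (p t) (p s) :=
    dist_add_dist_of_mem_segment h2'
  have H2 : dist (p u) (p t) + dist (p v) (p s) ≤ dist (p u) (p v) + dist (p s) (p t) := by
    have := dist_triangle (p u) q (p t)
    have := dist_triangle (p v) q (p s)
    have := dist_comm (p t) (p s)
    have := dist_comm q (p t)
    have := dist_comm q (p s)
    have := dist_comm (p v) q
    linarith
  have hB : G.Adj u t ∨ G.Adj v s := by
    by_contra h
    push_neg at h
    have h1' : ¬ dist (p u) (p t) < r u + r t := fun hd => h.1 ((hreal u t hut).mpr hd)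
    have h2' : ¬ dist (p v) (p s) < r v + r s := fun hd => h.2 ((hreal v s hvs).mpr hd)
    push_neg at h1' h2'
    linarith [H1.2]
  classical
  rcases hA with hA | hA <;> rcases hB with hB | hB
  · exact htf {u, s, t} (SimpleGraph.is3Clique_triple_iff.mpr ⟨hA, hB, hst⟩)
  · exact htf {u, v, s} (SimpleGraph.is3Clique_triple_iff.mpr ⟨huv, hA, hB⟩)
  · exact htf {u, v, t} (SimpleGraph.is3Clique_triple_iff.mpr ⟨huv, hB, hA⟩)
  · exact htf {v, s, t} (SimpleGraph.is3Clique_triple_iff.mpr ⟨hB, hA, hst⟩)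
end

section
/- Every unit disk graph on n vertices has a realization by equal-radius disks whose centers lie on the integer grid ℤ² with all coordinates of absolute value at most 2^(2^(O(n))) and with a common integer radius at most 2^(2^(O(n))). More precisely: if the system of inequalities {(xᵢ−xⱼ)² + (yᵢ−yⱼ)² ≤ (r−10)², for all edges ij; (xᵢ−xⱼ)² + (yᵢ−yⱼ)² ≥ (r+10)², for all non-edges ij; r ≥ 100} has a real solution, then rounding each coordinate and r down to the nearest integer yields integers x̃ᵢ, ỹᵢ, r̃ satisfying (x̃ᵢ−x̃ⱼ)² + (ỹᵢ−ỹⱼ)² < r̃² for all edges ij and (x̃ᵢ−x̃ⱼ)² + (ỹᵢ−ỹⱼ)² ≥ r̃² for all non-edges ij. -/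
private lemma floor_diff_bounds (a b : ℝ) :
    a - b - 1 < (⌊a⌋ : ℝ) - (⌊b⌋ : ℝ) ∧ (⌊a⌋ : ℝ) - (⌊b⌋ : ℝ) < a - b + 1 := by
  have h1 := Int.floor_le a
  have h2 := Int.floor_le b
  have h3 := Int.lt_floor_add_one a
  have h4 := Int.lt_floor_add_one b
  constructor <;> linarith

private lemma sq_lower (p a : ℝ) (hp : 0 ≤ p) (ha : 0 ≤ a) (h : a - 1 ≤ p) :
    a^2 - 2*a ≤ p^2 := by
  rcases le_or_gt a 1 with h1 | h1
  · nlinarith [mul_nonneg ha (show (0:ℝ) ≤ 2 - a by linarith), sq_nonneg p]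
  · nlinarith [sq_nonneg (p - (a-1))]

private lemma edge_core (a b d e r : ℝ) (ha : 0 ≤ a) (hb : 0 ≤ b)
    (hd : |d| < a + 1) (he : |e| < b + 1) (hab : a^2 + b^2 ≤ (r-10)^2) (hr : 100 ≤ r) :
    d^2 + e^2 < (r-1)^2 := by
  have hda : d^2 < (a+1)^2 := by
    have := abs_nonneg d
    nlinarith [sq_abs d]
  have heb : e^2 < (b+1)^2 := by
    have := abs_nonneg e
    nlinarith [sq_abs e]
  have har : a ≤ r - 10 := by nlinarith
  have hbr : b ≤ r - 10 := by nlinarith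
  have h1 : d^2 + e^2 < a^2 + b^2 + 2*a + 2*b + 2 := by nlinarith
  nlinarith

private lemma nonedge_core (a b p q r : ℝ) (ha : 0 ≤ a) (hb : 0 ≤ b)
    (hp : 0 ≤ p) (hq : 0 ≤ q) (hpa : a - 1 ≤ p) (hqb : b - 1 ≤ q)
    (hab : (r+10)^2 ≤ a^2 + b^2) (hr : 100 ≤ r) :
    r^2 ≤ p^2 + q^2 := by
  have h1 := sq_lower p a hp ha hpa
  have h2 := sq_lower q b hq hb hqb
  -- need 2*(a+b) ≤ a^2+b^2 - r^2
  have hS : 0 ≤ a^2 + b^2 - r^2 := by nlinarith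
  have hkey : 2*(a+b) ≤ a^2 + b^2 - r^2 := by
    have h4 : (2*(a+b))^2 ≤ 8*(a^2+b^2) := by nlinarith [sq_nonneg (a-b)]
    have hD : 0 ≤ a^2 + b^2 - (r+10)^2 := by linarith
    have h5 : 8*(a^2+b^2) ≤ (a^2+b^2 - r^2)^2 := by
      nlinarith [sq_nonneg (a^2+b^2-(r+10)^2),
        mul_nonneg hD (show (0:ℝ) ≤ 40*r + 192 by linarith), sq_nonneg (r-100)]
    have h6 : 0 ≤ 2*(a+b) := by linarith
    have h7 := Real.sqrt_le_sqrt (h4.trans h5)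
    rwa [Real.sqrt_sq h6, Real.sqrt_sq hS] at h7
  linarith

/-- Rounding a real solution of the ±10-slack unit-disk system to integers yields an
integer realization: if the centers `(xᵢ,yᵢ)` and radius `r ≥ 100` satisfy
`(xᵢ−xⱼ)²+(yᵢ−yⱼ)² ≤ (r−10)²` for edges and `≥ (r+10)²` for non-edges, then the
floors satisfy the strict unit-disk inequalities with radius `⌊r⌋`. -/
theorem stmt19 (n : ℕ) (G : SimpleGraph (Fin n)) (x y : Fin n → ℝ) (r : ℝ)
    (hr : 100 ≤ r)
    (hadj : ∀ i j, G.Adj i j → (x i - x j)^2 + (y i - y j)^2 ≤ (r - 10)^2)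
    (hnadj : ∀ i j, i ≠ j → ¬ G.Adj i j →
      (r + 10)^2 ≤ (x i - x j)^2 + (y i - y j)^2) :
    (∀ i j, G.Adj i j →
      ((⌊x i⌋ : ℝ) - (⌊x j⌋ : ℝ))^2 + ((⌊y i⌋ : ℝ) - (⌊y j⌋ : ℝ))^2 < (⌊r⌋ : ℝ)^2) ∧
    (∀ i j, i ≠ j → ¬ G.Adj i j →
      ((⌊r⌋ : ℝ))^2 ≤ ((⌊x i⌋ : ℝ) - (⌊x j⌋ : ℝ))^2 + ((⌊y i⌋ : ℝ) - (⌊y j⌋ : ℝ))^2) := by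
  have hrf1 : r - 1 < (⌊r⌋ : ℝ) := by
    have := Int.lt_floor_add_one r; linarith
  have hrf2 : (⌊r⌋ : ℝ) ≤ r := Int.floor_le r
  constructor
  · intro i j hij
    obtain ⟨hx1, hx2⟩ := floor_diff_bounds (x i) (x j)
    obtain ⟨hy1, hy2⟩ := floor_diff_bounds (y i) (y j)
    have hdx : |(⌊x i⌋ : ℝ) - (⌊x j⌋ : ℝ)| < |x i - x j| + 1 := by
      rw [abs_lt]; constructor <;> [skip; skip] <;>
        cases abs_cases (x i - x j) with
        | inl h => obtain ⟨h, _⟩ := h; linarith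
        | inr h => obtain ⟨h, _⟩ := h; linarith
    have hdy : |(⌊y i⌋ : ℝ) - (⌊y j⌋ : ℝ)| < |y i - y j| + 1 := by
      rw [abs_lt]; constructor <;> [skip; skip] <;>
        cases abs_cases (y i - y j) with
        | inl h => obtain ⟨h, _⟩ := h; linarith
        | inr h => obtain ⟨h, _⟩ := h; linarith
    have := edge_core |x i - x j| |y i - y j| ((⌊x i⌋ : ℝ) - (⌊x j⌋ : ℝ))
      ((⌊y i⌋ : ℝ) - (⌊y j⌋ : ℝ)) r (abs_nonneg _) (abs_nonneg _) hdx hdy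
      (by rw [sq_abs, sq_abs]; exact hadj i j hij) hr
    nlinarith
  · intro i j hne hij
    obtain ⟨hx1, hx2⟩ := floor_diff_bounds (x i) (x j)
    obtain ⟨hy1, hy2⟩ := floor_diff_bounds (y i) (y j)
    have hdx : |x i - x j| - 1 ≤ |(⌊x i⌋ : ℝ) - (⌊x j⌋ : ℝ)| := by
      cases abs_cases (x i - x j) with
      | inl h => obtain ⟨h, _⟩ := h
                 calc |x i - x j| - 1 = (x i - x j) - 1 := by rw [h]
                   _ ≤ (⌊x i⌋ : ℝ) - (⌊x j⌋ : ℝ) := by linarith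
                   _ ≤ _ := le_abs_self _
      | inr h => obtain ⟨h, _⟩ := h
                 calc |x i - x j| - 1 = -(x i - x j) - 1 := by rw [h]
                   _ ≤ -((⌊x i⌋ : ℝ) - (⌊x j⌋ : ℝ)) := by linarith
                   _ ≤ _ := neg_le_abs _
    have hdy : |y i - y j| - 1 ≤ |(⌊y i⌋ : ℝ) - (⌊y j⌋ : ℝ)| := by
      cases abs_cases (y i - y j) with
      | inl h => obtain ⟨h, _⟩ := h
                 calc |y i - y j| - 1 = (y i - y j) - 1 := by rw [h]
                   _ ≤ (⌊y i⌋ : ℝ) - (⌊y j⌋ : ℝ) := by linarith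
                   _ ≤ _ := le_abs_self _
      | inr h => obtain ⟨h, _⟩ := h
                 calc |y i - y j| - 1 = -(y i - y j) - 1 := by rw [h]
                   _ ≤ -((⌊y i⌋ : ℝ) - (⌊y j⌋ : ℝ)) := by linarith
                   _ ≤ _ := neg_le_abs _
    have hcore := nonedge_core |x i - x j| |y i - y j|
      |(⌊x i⌋ : ℝ) - (⌊x j⌋ : ℝ)| |(⌊y i⌋ : ℝ) - (⌊y j⌋ : ℝ)| r
      (abs_nonneg _) (abs_nonneg _) (abs_nonneg _) (abs_nonneg _) hdx hdy
      (by rw [sq_abs, sq_abs]; exact hnadj i j hne hij) hr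
    rw [sq_abs, sq_abs] at hcore
    nlinarith
end
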